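/- Let 𝒳 be a finite set with |𝒳| ≥ 2, N ≥ 1, and let p, q be pmfs on 𝒳^N with coordinate random variables U¹, …, U^N. Set D = √(2 ln 2) · √(D(q‖p)) and assume 0 < D ≤ 1/2. Then for every j ∈ {1, …, N}, H_p(U^j | U^{1:j−1}) − H_q(U^j | U^{1:j−1}) ≤ 2 N · D · log₂( |𝒳| / D ), where H_r(U^j | U^{1:j−1}) denotes the base-2 conditional entropy of the j-th coordinate given the first j−1 coordinates under the pmf r. (Per-position conditional-entropy continuity bound, Eq. (eq11a), established in the proof of Lemma 5 of the paper.) -/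

import Mathlib

open scoped ENNReal BigOperators

attribute [local instance] Classical.propDecidable

/-- Kullback–Leibler divergence (base 2) between two pmfs on a finite set,
valued in `[0, +∞]`. -/
noncomputable def klDiv {α : Type*} [Fintype α] (p q : α → ℝ) : ℝ≥0∞ :=
  if ∀ x, q x = 0 → p x = 0 then
    ENNReal.ofReal (∑ x, p x * Real.logb 2 (p x / q x))
  else ⊤

/-- A probability mass function on a finite set. -/
def IsPMF {α : Type*} [Fintype α] (p : α → ℝ) : Prop :=
  (∀ x, 0 ≤ p x) ∧ ∑ x, p x = 1

/-- Base-2 Shannon entropy of a pmf. -/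
noncomputable def shannonEntropy {α : Type*} [Fintype α] (p : α → ℝ) : ℝ :=
  -∑ x, p x * Real.logb 2 (p x)

/-- Pushforward (marginal) of a pmf along a map. -/
noncomputable def pushforward {Ω β : Type*} [Fintype Ω] [DecidableEq β]
    (p : Ω → ℝ) (f : Ω → β) : β → ℝ :=
  fun b => ∑ ω, if f ω = b then p ω else 0

/-- Conditional entropy `H_r(U^j | U^{1:j−1}) = H(r_{U^{1:j}}) − H(r_{U^{1:j−1}})`
of the `j`-th coordinate given the preceding coordinates, for a pmf `r`
on `𝒳^N` (base-2, chain-rule form). -/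
noncomputable def condEntChain {𝒳 : Type*} [Fintype 𝒳] [DecidableEq 𝒳] {N : ℕ}
    (r : (Fin N → 𝒳) → ℝ) (j : Fin N) : ℝ :=
  shannonEntropy (pushforward r (fun u => fun l : Fin ((j : ℕ) + 1) => u (Fin.castLE j.isLt l))) -
    shannonEntropy (pushforward r (fun u => fun l : Fin (j : ℕ) => u (Fin.castLE j.isLt.le l)))

/-!
The total-variation distance `T` between `p` and `q` is at most `D` by Pinsker's inequality,
which we derive from the pointwise bound `3 (t - 1)² / (2 (t + 2)) ≤ t log t - t + 1` and
Cauchy–Schwarz with weights `p + 2q`. Marginalisation does not increase `T`, and on a set of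
at most `n` points a Fannes-type bound gives `H(p) - H(q) ≤ T log n + η(T)` with
`η(x) = -x log x`, using `η(a) - η(b) ≤ η(|a - b|)` pointwise and Jensen's inequality. The
conditional entropy `H(U^j | U^{1:j-1})` is a difference of two marginal entropies, and both
marginals live on sets with at most `|𝒳|^N` points.
-/

open Real Set

section Pinsker

open InformationTheory (klFun klFun_apply klFun_one hasDerivAt_klFun continuous_klFun)

lemma hasDerivAt_klFun_sub_three_mul_sq_div {x : ℝ} (hx : 0 < x) :
    HasDerivAt (fun t => klFun t - 3 * (t - 1) ^ 2 / (2 * (t + 2)))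
      (log x - 3 / 2 * (1 - 9 / (x + 2) ^ 2)) x := by
  have hf : HasDerivAt (fun t : ℝ => 3 * (t - 1) ^ 2 / (2 * (t + 2)))
      ((3 * (2 * (x - 1)) * (2 * (x + 2)) - 3 * (x - 1) ^ 2 * 2) / (2 * (x + 2)) ^ 2) x := by
    refine HasDerivAt.div ?_ ?_ (by positivity)
    · simpa using (((hasDerivAt_id x).sub_const 1).pow 2).const_mul 3
    · simpa using ((hasDerivAt_id x).add_const 2).const_mul 2
  refine ((hasDerivAt_klFun hx.ne').sub hf).congr_deriv ?_
  field_simp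
  ring

lemma convexOn_klFun_sub_three_mul_sq_div :
    ConvexOn ℝ (Ici 0) (fun t => klFun t - 3 * (t - 1) ^ 2 / (2 * (t + 2))) := by
  have hderiv2 : ∀ x : ℝ, 0 < x → HasDerivAt (fun x => log x - 3 / 2 * (1 - 9 / (x + 2) ^ 2))
      (x⁻¹ - 27 / (x + 2) ^ 3) x := by
    intro x hx
    have h9 : HasDerivAt (fun x : ℝ => 9 / (x + 2) ^ 2)
        ((0 * (x + 2) ^ 2 - 9 * (2 * (x + 2))) / ((x + 2) ^ 2) ^ 2) x :=
      (hasDerivAt_const x 9).div (by simpa using ((hasDerivAt_id x).add_const 2).fun_pow 2)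
        (by positivity)
    refine ((hasDerivAt_log hx.ne').sub ((h9.const_sub 1).const_mul (3 / 2))).congr_deriv ?_
    field_simp
    ring
  refine convexOn_of_hasDerivWithinAt2_nonneg (convex_Ici 0) ?_ ?_ ?_ ?_
    (f' := fun x => log x - 3 / 2 * (1 - 9 / (x + 2) ^ 2))
    (f'' := fun x => x⁻¹ - 27 / (x + 2) ^ 3)
  · refine continuous_klFun.continuousOn.sub (continuousOn_of_forall_continuousAt fun x hx => ?_)
    have : (0 : ℝ) ≤ x := hx
    fun_prop (disch := positivity)
  all_goals
    intro x hx
    rw [interior_Ici] at hx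
  · exact (hasDerivAt_klFun_sub_three_mul_sq_div hx).hasDerivWithinAt
  · exact (hderiv2 x hx).hasDerivWithinAt
  · have hx : 0 < x := hx
    rw [sub_nonneg, div_le_iff₀ (by positivity), inv_mul_eq_div, le_div_iff₀ hx]
    -- `(x + 2)³ - 27 x = (x - 1)² (x + 8)`
    nlinarith [mul_nonneg (sq_nonneg (x - 1)) (by linarith : (0 : ℝ) ≤ x + 8)]

lemma three_mul_sq_sub_one_div_le_klFun {t : ℝ} (ht : 0 ≤ t) :
    3 * (t - 1) ^ 2 / (2 * (t + 2)) ≤ klFun t := by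
  have hmin : IsMinOn (fun t => klFun t - 3 * (t - 1) ^ 2 / (2 * (t + 2))) (Ici 0) 1 := by
    refine convexOn_klFun_sub_three_mul_sq_div.isMinOn_of_rightDeriv_eq_zero (by simp) ?_
    rw [((hasDerivAt_klFun_sub_three_mul_sq_div one_pos).hasDerivWithinAt).derivWithin
      (uniqueDiffWithinAt_Ioi 1)]
    norm_num
  have := hmin (mem_Ici.2 ht)
  norm_num [klFun_one] at this
  linarith

lemma three_mul_sq_sub_div_le_mul_log_div {x y : ℝ} (hx : 0 ≤ x) (hy : 0 ≤ y)
    (hxy : y = 0 → x = 0) :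
    3 * (x - y) ^ 2 / (2 * (x + 2 * y)) ≤ x * log (x / y) - x + y := by
  obtain rfl | hy := hy.eq_or_lt
  · simp [hxy rfl]
  calc 3 * (x - y) ^ 2 / (2 * (x + 2 * y)) = y * (3 * (x / y - 1) ^ 2 / (2 * (x / y + 2))) := by
        field_simp
    _ ≤ y * klFun (x / y) :=
        mul_le_mul_of_nonneg_left (three_mul_sq_sub_one_div_le_klFun (div_nonneg hx hy.le)) hy.le
    _ = x * log (x / y) - x + y := by
        rw [klFun_apply, mul_sub, mul_add, ← mul_assoc, mul_div_cancel₀ _ hy.ne']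
        ring

end Pinsker

theorem sq_sum_abs_sub_le_two_mul_sum_mul_log_div {α : Type*} [Fintype α] {p q : α → ℝ}
    (hp : IsPMF p) (hq : IsPMF q) (hpq : ∀ x, q x = 0 → p x = 0) :
    (∑ x, |p x - q x|) ^ 2 ≤ 2 * ∑ x, p x * log (p x / q x) := by
  obtain ⟨hp0, hp1⟩ := hp
  obtain ⟨hq0, hq1⟩ := hq
  have hw : ∀ x, 0 ≤ p x + 2 * q x := fun x => by linarith [hp0 x, hq0 x]
  have hcs : (∑ x, |p x - q x|) ^ 2 ≤
      (∑ x, (p x - q x) ^ 2 / (p x + 2 * q x)) * ∑ x, (p x + 2 * q x) := by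
    refine Finset.sum_sq_le_sum_mul_sum_of_sq_le_mul _ (fun x _ => div_nonneg (sq_nonneg _) (hw x))
      (fun x _ => hw x) fun x _ => ?_
    obtain hzero | hpos := (hw x).eq_or_lt
    · have hpx : p x = 0 := by linarith [hp0 x, hq0 x]
      have hqx : q x = 0 := by linarith [hp0 x, hq0 x]
      simp [hpx, hqx]
    · rw [sq_abs, div_mul_cancel₀ _ hpos.ne']
  have hpoint : 3 / 2 * ∑ x, (p x - q x) ^ 2 / (p x + 2 * q x) ≤
      ∑ x, (p x * log (p x / q x) - p x + q x) := by
    rw [Finset.mul_sum]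
    refine Finset.sum_le_sum fun x _ => le_of_eq_of_le ?_
      (three_mul_sq_sub_div_le_mul_log_div (hp0 x) (hq0 x) (hpq x))
    rw [← div_div]
    ring
  rw [Finset.sum_add_distrib, Finset.sum_sub_distrib, hp1, hq1, sub_add_cancel] at hpoint
  rw [Finset.sum_add_distrib, ← Finset.mul_sum, hp1, hq1] at hcs
  linarith

theorem ofReal_sq_sum_abs_sub_le_klDiv {α : Type*} [Fintype α] {p q : α → ℝ}
    (hp : IsPMF p) (hq : IsPMF q) :
    ENNReal.ofReal ((∑ x, |p x - q x|) ^ 2) ≤ ENNReal.ofReal (2 * log 2) * klDiv p q := by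
  have hlog2 : 0 < log 2 := log_pos one_lt_two
  unfold klDiv
  split_ifs with hpq
  · rw [← ENNReal.ofReal_mul (by positivity)]
    refine ENNReal.ofReal_le_ofReal ((sq_sum_abs_sub_le_two_mul_sum_mul_log_div hp hq hpq).trans ?_)
    simp only [logb, Finset.mul_sum]
    exact le_of_eq (Finset.sum_congr rfl fun x _ => by field_simp)
  · rw [ENNReal.mul_top (by simp [hlog2])]
    exact le_top

theorem ofReal_sum_abs_sub_le_sqrt_klDiv {α : Type*} [Fintype α] {p q : α → ℝ}
    (hp : IsPMF p) (hq : IsPMF q) :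
    ENNReal.ofReal (∑ x, |p x - q x|) ≤
      ENNReal.ofReal (√(2 * log 2)) * klDiv p q ^ (1 / 2 : ℝ) := by
  have hsum : 0 ≤ ∑ x, |p x - q x| := Finset.sum_nonneg fun x _ => abs_nonneg _
  calc ENNReal.ofReal (∑ x, |p x - q x|) = ENNReal.ofReal ((∑ x, |p x - q x|) ^ 2) ^ (1 / 2 : ℝ) := by
        rw [ENNReal.ofReal_rpow_of_nonneg (sq_nonneg _) (by norm_num), ← sqrt_eq_rpow, sqrt_sq hsum]
    _ ≤ (ENNReal.ofReal (2 * log 2) * klDiv p q) ^ (1 / 2 : ℝ) :=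
        ENNReal.rpow_le_rpow (ofReal_sq_sum_abs_sub_le_klDiv hp hq) (by norm_num)
    _ = ENNReal.ofReal (√(2 * log 2)) * klDiv p q ^ (1 / 2 : ℝ) := by
        rw [ENNReal.mul_rpow_of_nonneg _ _ (by norm_num),
          ENNReal.ofReal_rpow_of_nonneg (by positivity) (by norm_num), ← sqrt_eq_rpow]

lemma negMulLog_one_sub_le {t : ℝ} (ht0 : 0 ≤ t) (ht : t ≤ 1 / 2) :
    negMulLog (1 - t) ≤ negMulLog t := by
  obtain rfl | ht0 := ht0.eq_or_lt
  · simp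
  have h1 : 0 < 1 - t := by linarith
  have hlog1 : -t ≤ (1 - t) * log (1 - t) := by
    have := mul_le_mul_of_nonneg_left (one_sub_inv_le_log_of_pos h1) h1.le
    rwa [mul_sub, mul_inv_cancel₀ h1.ne', mul_one, sub_sub_cancel_left] at this
  have hlog2 : 1 - 2 * t ≤ (1 - t) * (log (1 - t) - log t) := by
    have := mul_le_mul_of_nonneg_left (one_sub_inv_le_log_of_pos (div_pos h1 ht0)) h1.le
    rw [log_div h1.ne' ht0.ne', inv_div] at this
    refine le_of_eq_of_le ?_ this
    field_simp
    ring
  rw [negMulLog, negMulLog, neg_mul, neg_mul, neg_le_neg_iff]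
  nlinarith [mul_le_mul_of_nonneg_left hlog1 (by linarith : (0 : ℝ) ≤ 1 - 2 * t),
    mul_le_mul_of_nonneg_left hlog2 ht0.le]

lemma ConcaveOn.map_add_map_add_le {s : Set ℝ} {f : ℝ → ℝ} (hf : ConcaveOn ℝ s f) {a c t : ℝ}
    (ha : a ∈ s) (hct : c + t ∈ s) (hac : a ≤ c) (ht : 0 ≤ t) :
    f a + f (c + t) ≤ f (a + t) + f c := by
  obtain hd | hd := (show 0 ≤ c + t - a by linarith).eq_or_lt
  · obtain rfl : t = 0 := by linarith
    obtain rfl : c = a := by linarith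
    rw [add_zero]
  set d := c + t - a
  have hw : (c - a) / d + t / d = 1 := by field_simp; ring
  have h1 := hf.2 ha hct (by positivity) (by positivity) hw
  have h2 := hf.2 ha hct (by positivity) (by positivity) ((add_comm _ _).trans hw)
  simp only [smul_eq_mul] at h1 h2
  rw [show (c - a) / d * a + t / d * (c + t) = a + t by field_simp; ring] at h1
  rw [show t / d * a + (c - a) / d * (c + t) = c by field_simp; ring] at h2
  linear_combination h1 + h2 - (f a + f (c + t)) * hw

lemma negMulLog_sub_le_negMulLog_abs_sub {a b : ℝ} (ha0 : 0 ≤ a) (hb0 : 0 ≤ b) (hb1 : b ≤ 1)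
    (hab : |a - b| ≤ 1 / 2) :
    negMulLog a - negMulLog b ≤ negMulLog |a - b| := by
  rcases le_total a b with h | h
  · rw [abs_sub_comm, abs_of_nonneg (sub_nonneg.2 h)] at hab ⊢
    have := concaveOn_negMulLog.map_add_map_add_le ha0 (c := 1 - (b - a)) (t := b - a)
      (by simp) (by linarith) (sub_nonneg.2 h)
    rw [sub_add_cancel, negMulLog_one, add_sub_cancel] at this
    linarith [negMulLog_one_sub_le (sub_nonneg.2 h) hab]
  · rw [abs_of_nonneg (sub_nonneg.2 h)]
    have := concaveOn_negMulLog.map_add_map_add_le (mem_Ici.2 le_rfl) (c := b) (t := a - b)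
      (by simp; linarith) hb0 (sub_nonneg.2 h)
    rw [add_sub_cancel, zero_add, negMulLog_zero] at this
    linarith

lemma mul_negMulLog_div {n : ℝ} (hn : n ≠ 0) (t : ℝ) :
    n * negMulLog (t / n) = t * log n + negMulLog t := by
  rw [div_eq_mul_inv, negMulLog_mul]
  simp only [negMulLog, log_inv]
  field_simp
  ring

lemma sum_negMulLog_le {α : Type*} [Fintype α] [Nonempty α] {r : α → ℝ} (hr : ∀ x, 0 ≤ r x) :
    ∑ x, negMulLog (r x) ≤ (∑ x, r x) * log (Fintype.card α) + negMulLog (∑ x, r x) := by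
  have hn : (Fintype.card α : ℝ) ≠ 0 := by positivity
  have := concaveOn_negMulLog.le_map_sum (t := Finset.univ) (w := fun _ => (Fintype.card α : ℝ)⁻¹)
    (p := r) (fun _ _ => by positivity) (by simp [hn]) (fun x _ => hr x)
  simp only [smul_eq_mul, ← Finset.mul_sum] at this
  rw [← mul_negMulLog_div hn, div_eq_inv_mul]
  exact (inv_mul_le_iff₀ (by positivity)).1 this

lemma mul_log_add_negMulLog_le {n s t : ℝ} (hn : 0 < n) (hs : 0 ≤ s) (hst : s ≤ t)
    (ht : t ≤ n * exp (-1)) :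
    s * log n + negMulLog s ≤ t * log n + negMulLog t := by
  rw [← mul_negMulLog_div hn.ne', ← mul_negMulLog_div hn.ne']
  refine mul_le_mul_of_nonneg_left ?_ hn.le
  have := mul_log_strictAntiOn.antitoneOn (a := s / n) (b := t / n)
    ⟨div_nonneg hs hn.le, by rw [div_le_iff₀' hn]; linarith⟩
    ⟨div_nonneg (hs.trans hst) hn.le, by rwa [div_le_iff₀' hn]⟩
    (div_le_div_of_nonneg_right hst hn.le)
  simp only [negMulLog, neg_mul]
  linarith

theorem sum_negMulLog_sub_le {α : Type*} [Fintype α] {p q : α → ℝ} (hp : IsPMF p) (hq : IsPMF q)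
    {n : ℕ} (hcard : Fintype.card α ≤ n) (hn : 2 ≤ n) {t : ℝ} (ht : t ≤ 1 / 2)
    (hpq : ∑ x, |p x - q x| ≤ t) :
    ∑ x, negMulLog (p x) - ∑ x, negMulLog (q x) ≤ t * log n + negMulLog t := by
  obtain ⟨hp0, hp1⟩ := hp
  obtain ⟨hq0, hq1⟩ := hq
  have : Nonempty α := by
    by_contra h
    simp [not_nonempty_iff.1 h] at hp1
  have habs : ∀ x, |p x - q x| ≤ 1 / 2 := fun x =>
    ((Finset.single_le_sum (fun y _ => abs_nonneg (p y - q y)) (Finset.mem_univ x)).trans hpq).trans ht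
  have hq1' : ∀ x, q x ≤ 1 := fun x =>
    hq1 ▸ Finset.single_le_sum (fun y _ => hq0 y) (Finset.mem_univ x)
  have hn2 : (2 : ℝ) ≤ n := by exact_mod_cast hn
  have hexp : (1 / 4 : ℝ) ≤ exp (-1) := by
    rw [exp_neg, le_inv_comm₀ (by norm_num) (exp_pos 1)]
    linarith [exp_one_lt_d9]
  calc ∑ x, negMulLog (p x) - ∑ x, negMulLog (q x)
      ≤ ∑ x, negMulLog |p x - q x| := by
        rw [← Finset.sum_sub_distrib]
        exact Finset.sum_le_sum fun x _ =>
          negMulLog_sub_le_negMulLog_abs_sub (hp0 x) (hq0 x) (hq1' x) (habs x)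
    _ ≤ (∑ x, |p x - q x|) * log (Fintype.card α) + negMulLog (∑ x, |p x - q x|) :=
        sum_negMulLog_le fun x => abs_nonneg _
    _ ≤ (∑ x, |p x - q x|) * log n + negMulLog (∑ x, |p x - q x|) := by
        gcongr
    _ ≤ t * log n + negMulLog t :=
        mul_log_add_negMulLog_le (by positivity) (Finset.sum_nonneg fun x _ => abs_nonneg _) hpq
          (by nlinarith)

section Marginal

variable {Ω β : Type*} [Fintype Ω] [DecidableEq β]

lemma pushforward_eq_sum_filter (p : Ω → ℝ) (f : Ω → β) (b : β) :
    pushforward p f b = ∑ ω with f ω = b, p ω := by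
  rw [pushforward, Finset.sum_filter]

lemma pushforward_isPMF [Fintype β] {p : Ω → ℝ} (hp : IsPMF p) (f : Ω → β) : IsPMF (pushforward p f) := by
  refine ⟨fun b => ?_, ?_⟩
  · rw [pushforward_eq_sum_filter]
    exact Finset.sum_nonneg fun ω _ => hp.1 ω
  · simp only [pushforward_eq_sum_filter]
    rw [Finset.sum_fiberwise, hp.2]

lemma sum_abs_pushforward_sub_le [Fintype β] (p q : Ω → ℝ) (f : Ω → β) :
    ∑ b, |pushforward p f b - pushforward q f b| ≤ ∑ ω, |p ω - q ω| := by
  calc ∑ b, |pushforward p f b - pushforward q f b|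
      = ∑ b, |∑ ω with f ω = b, (p ω - q ω)| := by
        simp only [pushforward_eq_sum_filter, Finset.sum_sub_distrib]
    _ ≤ ∑ b, ∑ ω with f ω = b, |p ω - q ω| :=
        Finset.sum_le_sum fun b _ => Finset.abs_sum_le_sum_abs _ _
    _ = ∑ ω, |p ω - q ω| := Finset.sum_fiberwise _ _ _

theorem sum_negMulLog_pushforward_sub_le [Fintype β] {p q : Ω → ℝ} (hp : IsPMF p) (hq : IsPMF q)
    (f : Ω → β) {n : ℕ} (hcard : Fintype.card β ≤ n) (hn : 2 ≤ n) {t : ℝ} (ht : t ≤ 1 / 2)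
    (hpq : ∑ ω, |p ω - q ω| ≤ t) :
    ∑ b, negMulLog (pushforward p f b) - ∑ b, negMulLog (pushforward q f b) ≤
      t * log n + negMulLog t :=
  sum_negMulLog_sub_le (pushforward_isPMF hp f) (pushforward_isPMF hq f) hcard hn ht
    ((sum_abs_pushforward_sub_le p q f).trans hpq)

end Marginal

lemma shannonEntropy_eq_sum_negMulLog {α : Type*} [Fintype α] (p : α → ℝ) :
    shannonEntropy p = (∑ x, negMulLog (p x)) / log 2 := by
  simp only [shannonEntropy, negMulLog, logb, Finset.sum_div, ← Finset.sum_neg_distrib]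
  exact Finset.sum_congr rfl fun x _ => by ring

/-- Per-position conditional-entropy continuity bound, Eq. (eq11a), in the
proof of Lemma 5: with `D = √(2 ln 2)·√(D(q‖p))` (in `[0,+∞]`), if
`0 < D ≤ 1/2` then for every `j`,
`H_p(U^j|U^{1:j−1}) − H_q(U^j|U^{1:j−1}) ≤ 2N·D·log₂(|𝒳|/D)`. -/
theorem condEnt_diff_le_per_position
    {𝒳 : Type*} [Fintype 𝒳] [DecidableEq 𝒳] (hcard : 2 ≤ Fintype.card 𝒳)
    {N : ℕ} (hN : 1 ≤ N)
    (p q : (Fin N → 𝒳) → ℝ) (hp : IsPMF p) (hq : IsPMF q)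
    (D : ℝ≥0∞)
    (hD : D = ENNReal.ofReal (Real.sqrt (2 * Real.log 2)) * (klDiv q p) ^ (1 / 2 : ℝ))
    (hD0 : 0 < D) (hDhalf : D ≤ ENNReal.ofReal (1 / 2)) :
    ∀ j : Fin N,
      condEntChain p j - condEntChain q j ≤
        2 * (N : ℝ) * D.toReal * Real.logb 2 ((Fintype.card 𝒳 : ℝ) / D.toReal) := by
  intro j
  have hDtop : D ≠ ⊤ := ne_top_of_le_ne_top ENNReal.ofReal_ne_top hDhalf
  have hd0 : 0 < D.toReal := ENNReal.toReal_pos hD0.ne' hDtop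
  have hd : D.toReal ≤ 1 / 2 := ENNReal.toReal_le_of_le_ofReal (by norm_num) hDhalf
  have hqp : ∑ u, |q u - p u| ≤ D.toReal :=
    (ENNReal.ofReal_le_iff_le_toReal hDtop).1 (hD ▸ ofReal_sum_abs_sub_le_sqrt_klDiv hq hp)
  have hpq : ∑ u, |p u - q u| ≤ D.toReal := by simpa only [abs_sub_comm] using hqp
  have hn : 2 ≤ Fintype.card 𝒳 ^ N := hcard.trans (Nat.le_self_pow (by omega) _)
  have hcardN : ∀ k ≤ N, Fintype.card (Fin k → 𝒳) ≤ Fintype.card 𝒳 ^ N := fun k hk => by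
    simpa using Nat.pow_le_pow_right (by omega) hk
  have hA := sum_negMulLog_pushforward_sub_le hp hq
    (fun u (l : Fin (j + 1)) => u (Fin.castLE j.isLt l)) (hcardN _ j.isLt) hn hd hpq
  have hB := sum_negMulLog_pushforward_sub_le hq hp
    (fun u (l : Fin j) => u (Fin.castLE j.isLt.le l)) (hcardN _ j.isLt.le) hn hd hqp
  have hlog2 : 0 < log 2 := log_pos one_lt_two
  have hη : 0 ≤ negMulLog D.toReal := negMulLog_nonneg hd0.le (by linarith)
  have hN' : (1 : ℝ) ≤ N := by exact_mod_cast hN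
  rw [Nat.cast_pow, log_pow] at hA hB
  simp only [condEntChain, shannonEntropy_eq_sum_negMulLog]
  rw [logb, log_div (by positivity) hd0.ne', div_sub_div_same, div_sub_div_same,
    div_sub_div_same, mul_div_assoc', div_le_div_iff_of_pos_right hlog2]
  rw [negMulLog] at hA hB hη
  nlinarith [mul_nonneg (sub_nonneg.2 hN') hη]
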